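/- Let m ≥ 1 be an integer and let f : (0,∞) → ℝ be measurable with ∫_a^∞ |f(r)| r^{2m−1} dr < ∞ for every a > 0. Define φ(t) = (2/Γ(m)) ∫_t^∞ (r² − t²)^{m−1} f(r) r dr. Then for almost every t > 0, f(t) = ((−D)^m φ)(t), where (−D) is the operator taking a function g to the function t ↦ −(1/(2t)) g′(t), and (−D)^m denotes its m-fold iterate. -/

import Mathlib

open MeasureTheory Set Filter Metric
open scoped ENNReal Topology

/-- The right-sided Erdélyi–Kober type fractional integral
`(I^α_{−,2} f)(t) = (2/Γ(α)) ∫_t^∞ (r²−t²)^{α−1} f(r) r dr`. -/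
noncomputable def EKminus (α : ℝ) (f : ℝ → ℝ) : ℝ → ℝ :=
  fun t => (2 / Real.Gamma α) * ∫ r in Ioi t, (r ^ 2 - t ^ 2) ^ (α - 1) * f r * r

/-- The operator `−D` taking `g` to `t ↦ −(1/(2t)) g′(t)`. -/
noncomputable def negD : (ℝ → ℝ) → (ℝ → ℝ) := fun g t => -(1 / (2 * t)) * deriv g t

namespace EKInversion

/-- The basic kernel integral with natural-number exponent. -/
noncomputable def Jint (f : ℝ → ℝ) (k : ℕ) (t : ℝ) : ℝ :=
  ∫ r in Ioi t, (r ^ 2 - t ^ 2) ^ k * f r * r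

/-- Lebesgue a.e. differentiation: derivative of `t ↦ ∫_{Iic t} g`. -/
lemma ae_hasDerivAt_integral_Iic (g : ℝ → ℝ) (hg : Integrable g) :
    ∀ᵐ x : ℝ, HasDerivAt (fun t => ∫ u in Iic t, g u) (g x) x := by
  filter_upwards [(IsUnifLocDoublingMeasure.vitaliFamily (volume : Measure ℝ)
      1).ae_tendsto_average hg.locallyIntegrable] with x hx
  set F : ℝ → ℝ := fun t => ∫ u in Iic t, g u with hF
  have hsub : ∀ s t : ℝ, s ≤ t → F t - F s = ∫ u in Ioc s t, g u := by
    intro s t hst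
    rw [hF]
    simp only
    rw [← Set.Iic_union_Ioc_eq_Iic hst,
      setIntegral_union (Set.Iic_disjoint_Ioc le_rfl) measurableSet_Ioc
        hg.integrableOn hg.integrableOn]
    ring
  rw [hasDerivAt_iff_tendsto_slope]
  have hmem : (𝓝[≠] x) = (𝓝[<] x) ⊔ (𝓝[>] x) := by
    rw [← nhdsWithin_union, Set.Iio_union_Ioi]
  rw [hmem, tendsto_sup]
  constructor
  · apply Tendsto.congr' _ (hx.comp (Real.tendsto_Icc_vitaliFamily_left x))
    filter_upwards [self_mem_nhdsWithin] with y (hy : y < x)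
    show ⨍ u in Icc y x, g u = slope F x y
    have h1 : y - x ≠ 0 := by intro h; linarith [sub_eq_zero.mp h]
    have h2 : x - y ≠ 0 := by intro h; linarith [sub_eq_zero.mp h]
    rw [slope_def_field, setAverage_eq, integral_Icc_eq_integral_Ioc, ← hsub y x hy.le,
      Real.volume_real_Icc_of_le (by linarith), smul_eq_mul]
    field_simp
    ring
  · apply Tendsto.congr' _ (hx.comp (Real.tendsto_Icc_vitaliFamily_right x))
    filter_upwards [self_mem_nhdsWithin] with y (hy : x < y)
    show ⨍ u in Icc x y, g u = slope F x y
    have h1 : y - x ≠ 0 := by intro h; linarith [sub_eq_zero.mp h]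
    rw [slope_def_field, setAverage_eq, integral_Icc_eq_integral_Ioc, ← hsub x y hy.le,
      Real.volume_real_Icc_of_le (by linarith), smul_eq_mul]
    field_simp

lemma ae_hasDerivAt_integral_Ioi (g : ℝ → ℝ) (hg : Integrable g) :
    ∀ᵐ x : ℝ, HasDerivAt (fun t => ∫ u in Ioi t, g u) (-(g x)) x := by
  filter_upwards [ae_hasDerivAt_integral_Iic g hg] with x hx
  have heq : (fun t : ℝ => ∫ u in Ioi t, g u)
      = fun t => (∫ u, g u) - ∫ u in Iic t, g u := by
    funext t
    have h := integral_add_compl (s := Iic t) measurableSet_Iic hg (f := g)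
    rw [compl_Iic] at h
    linarith
  rw [heq]
  have h := (hasDerivAt_const x (∫ u, g u)).sub hx
  rw [zero_sub] at h
  exact h

/-- Lipschitz-type estimate for `x ↦ (max x 0)^(j+1)`. -/
lemma abs_maxpow_sub_le (j : ℕ) {B x y : ℝ} (hB : 0 ≤ B) (hx : x ≤ B) (hy : y ≤ B) :
    |max x 0 ^ (j + 1) - max y 0 ^ (j + 1)| ≤ (j + 1 : ℝ) * B ^ j * |x - y| := by
  induction j with
  | zero => simpa using abs_max_sub_max_le_abs x y 0
  | succ j ih =>
    have hX : (0:ℝ) ≤ max x 0 := le_max_right x 0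
    have hY : (0:ℝ) ≤ max y 0 := le_max_right y 0
    have hXB : max x 0 ≤ B := max_le hx hB
    have hYB : max y 0 ≤ B := max_le hy hB
    have hid : max x 0 ^ (j + 1 + 1) - max y 0 ^ (j + 1 + 1)
        = max x 0 * (max x 0 ^ (j + 1) - max y 0 ^ (j + 1))
          + (max x 0 - max y 0) * max y 0 ^ (j + 1) := by ring
    have e1 : |max x 0| * |max x 0 ^ (j + 1) - max y 0 ^ (j + 1)|
        ≤ B * ((j + 1 : ℝ) * B ^ j * |x - y|) :=
      mul_le_mul (by rwa [abs_of_nonneg hX]) ih (abs_nonneg _) hB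
    have e2 : |max x 0 - max y 0| * |max y 0 ^ (j + 1)| ≤ |x - y| * B ^ (j + 1) :=
      mul_le_mul (abs_max_sub_max_le_abs x y 0)
        (by rw [abs_of_nonneg (pow_nonneg hY _)]; exact pow_le_pow_left₀ hY hYB _)
        (abs_nonneg _) (abs_nonneg _)
    calc |max x 0 ^ (j + 1 + 1) - max y 0 ^ (j + 1 + 1)|
        ≤ |max x 0| * |max x 0 ^ (j + 1) - max y 0 ^ (j + 1)|
          + |max x 0 - max y 0| * |max y 0 ^ (j + 1)| := by
          rw [hid]
          exact (abs_add_le _ _).trans (by rw [abs_mul, abs_mul])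
      _ ≤ B * ((j + 1 : ℝ) * B ^ j * |x - y|) + |x - y| * B ^ (j + 1) := add_le_add e1 e2
      _ = ((j + 1 : ℕ) + 1 : ℝ) * B ^ (j + 1) * |x - y| := by push_cast; ring

section Main

variable {m : ℕ} {f : ℝ → ℝ}

lemma integrableOn_fr_pow (hm : 1 ≤ m) (hf : Measurable f)
    (hint : ∀ a : ℝ, 0 < a →
      ∫⁻ r in Ioi a, ENNReal.ofReal (|f r| * r ^ (2 * (m : ℝ) - 1)) < ⊤)
    {a : ℝ} (ha : 0 < a) {n : ℕ} (hn : n ≤ 2 * m - 1) :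
    IntegrableOn (fun r => |f r| * r ^ n) (Ioi a) := by
  have hcast : ∀ r : ℝ, r ^ (2 * (m : ℝ) - 1) = r ^ (2 * m - 1 : ℕ) := by
    intro r
    rw [← Real.rpow_natCast r (2 * m - 1)]
    congr 1
    have h1 : (1:ℕ) ≤ 2 * m := by omega
    rw [Nat.cast_sub h1]
    push_cast
    ring
  have hbase : IntegrableOn (fun r => |f r| * r ^ (2 * m - 1 : ℕ)) (Ioi a) := by
    have hmeas : Measurable fun r : ℝ => |f r| * r ^ (2 * m - 1 : ℕ) :=
      hf.abs.mul (measurable_id.pow_const _)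
    refine ⟨hmeas.aestronglyMeasurable, ?_⟩
    rw [hasFiniteIntegral_iff_ofReal ?_]
    · have h := hint a ha
      simp only [hcast] at h
      exact h
    · filter_upwards [ae_restrict_mem measurableSet_Ioi] with r hr
      have hr0 : (0:ℝ) < r := lt_trans ha hr
      positivity
  refine (hbase.const_mul ((a ^ (2 * m - 1 - n))⁻¹)).mono'
    ((hf.abs.mul (measurable_id.pow_const _)).aestronglyMeasurable) ?_
  filter_upwards [ae_restrict_mem measurableSet_Ioi] with r hr
  have hr0 : (0:ℝ) < r := lt_trans ha hr
  have h1 : a ^ (2 * m - 1 - n) * r ^ n ≤ r ^ (2 * m - 1 : ℕ) := by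
    calc a ^ (2 * m - 1 - n) * r ^ n ≤ r ^ (2 * m - 1 - n) * r ^ n := by
          gcongr
          exact hr.le
      _ = r ^ (2 * m - 1 : ℕ) := by rw [← pow_add]; congr 1; omega
  have hnorm : ‖|f r| * r ^ n‖ = |f r| * r ^ n := by
    rw [Real.norm_eq_abs, abs_of_nonneg (by positivity)]
  rw [hnorm, inv_mul_eq_div, le_div_iff₀ (by positivity)]
  calc |f r| * r ^ n * a ^ (2 * m - 1 - n) = |f r| * (a ^ (2 * m - 1 - n) * r ^ n) := by ring
    _ ≤ |f r| * r ^ (2 * m - 1 : ℕ) := by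
        exact mul_le_mul_of_nonneg_left h1 (abs_nonneg _)

lemma integrableOn_max (hm : 1 ≤ m) (hf : Measurable f)
    (hint : ∀ a : ℝ, 0 < a →
      ∫⁻ r in Ioi a, ENNReal.ofReal (|f r| * r ^ (2 * (m : ℝ) - 1)) < ⊤)
    {a : ℝ} (ha : 0 < a) {k : ℕ} (hk : 2 * k + 1 ≤ 2 * m - 1) (t : ℝ) :
    IntegrableOn (fun r => max (r ^ 2 - t ^ 2) 0 ^ k * f r * r) (Ioi a) := by
  have hi := integrableOn_fr_pow hm hf hint ha (n := 2 * k + 1) hk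
  refine hi.mono' ?_ ?_
  · exact (((((measurable_id.pow_const 2).sub_const (t ^ 2)).max measurable_const).pow_const
      k).mul hf |>.mul measurable_id).aestronglyMeasurable
  · filter_upwards [ae_restrict_mem measurableSet_Ioi] with r hr
    have hr0 : (0:ℝ) < r := lt_trans ha hr
    have h1 : max (r ^ 2 - t ^ 2) 0 ≤ r ^ 2 :=
      max_le (by nlinarith [sq_nonneg t]) (by positivity)
    have h2 : max (r ^ 2 - t ^ 2) 0 ^ k ≤ r ^ (2 * k) := by
      calc max (r ^ 2 - t ^ 2) 0 ^ k ≤ (r ^ 2) ^ k :=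
            pow_le_pow_left₀ (le_max_right _ _) h1 k
        _ = r ^ (2 * k) := by rw [← pow_mul]
    have hnn : (0:ℝ) ≤ max (r ^ 2 - t ^ 2) 0 := le_max_right _ _
    calc ‖max (r ^ 2 - t ^ 2) 0 ^ k * f r * r‖
        = max (r ^ 2 - t ^ 2) 0 ^ k * |f r| * r := by
          rw [Real.norm_eq_abs, abs_mul, abs_mul, abs_of_nonneg (pow_nonneg hnn _),
            abs_of_pos hr0]
      _ ≤ r ^ (2 * k) * |f r| * r := by gcongr
      _ = |f r| * r ^ (2 * k + 1) := by ring

lemma integrableOn_Jint (hm : 1 ≤ m) (hf : Measurable f)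
    (hint : ∀ a : ℝ, 0 < a →
      ∫⁻ r in Ioi a, ENNReal.ofReal (|f r| * r ^ (2 * (m : ℝ) - 1)) < ⊤)
    {t : ℝ} (ht : 0 < t) {k : ℕ} (hk : 2 * k + 1 ≤ 2 * m - 1) :
    IntegrableOn (fun r => (r ^ 2 - t ^ 2) ^ k * f r * r) (Ioi t) := by
  refine (integrableOn_max hm hf hint ht hk t).congr_fun ?_ measurableSet_Ioi
  intro r hr
  have h0 : (0:ℝ) ≤ r ^ 2 - t ^ 2 := by nlinarith [mem_Ioi.mp hr, ht]
  simp [max_eq_left h0]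

/-- The key differentiation lemma. -/
lemma hasDerivAt_Jint (hm : 1 ≤ m) (hf : Measurable f)
    (hint : ∀ a : ℝ, 0 < a →
      ∫⁻ r in Ioi a, ENNReal.ofReal (|f r| * r ^ (2 * (m : ℝ) - 1)) < ⊤)
    {k : ℕ} (hk1 : 1 ≤ k) (hk2 : 2 * k + 1 ≤ 2 * m - 1) {t₀ : ℝ} (ht : 0 < t₀) :
    HasDerivAt (Jint f k) (-(2 * t₀) * k * Jint f (k - 1) t₀) t₀ := by
  obtain ⟨j, rfl⟩ : ∃ j, k = j + 1 := ⟨k - 1, by omega⟩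
  set a : ℝ := t₀ / 2 with ha_def
  have ha : 0 < a := by positivity
  have hat : a < t₀ := by rw [ha_def]; linarith
  set μ : Measure ℝ := volume.restrict (Ioi a) with hμ
  set F' : ℝ → ℝ := (Ioi t₀).indicator
      (fun r => (-(2 * t₀) * ((j : ℝ) + 1)) * ((r ^ 2 - t₀ ^ 2) ^ j * f r * r)) with hF'def
  have hj2 : 2 * j + 1 ≤ 2 * m - 1 := by omega
  have hmeasF : ∀ t : ℝ, AEStronglyMeasurable
      (fun r => max (r ^ 2 - t ^ 2) 0 ^ (j + 1) * f r * r) μ := fun t =>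
    (((((measurable_id.pow_const 2).sub_const (t ^ 2)).max measurable_const).pow_const
      (j + 1)).mul hf |>.mul measurable_id).aestronglyMeasurable
  have main : HasDerivAt
      (fun t => ∫ r, max (r ^ 2 - t ^ 2) 0 ^ (j + 1) * f r * r ∂μ) (∫ r, F' r ∂μ) t₀ := by
    refine (hasDerivAt_integral_of_dominated_loc_of_lip (𝕜 := ℝ)
      (F := fun t r => max (r ^ 2 - t ^ 2) 0 ^ (j + 1) * f r * r) (F' := F') (x₀ := t₀)
      (s := ball t₀ (t₀ / 2))
      (bound := fun r => 3 * t₀ * ((j : ℝ) + 1) * r ^ (2 * j) * (|f r| * r))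
      (ball_mem_nhds t₀ (by positivity)) (Eventually.of_forall hmeasF)
      (integrableOn_max hm hf hint ha hk2 t₀)
      ?_ ?_ ?_ ?_).2
    · exact ((((measurable_id.pow_const 2).sub_const (t₀ ^ 2)).pow_const j).mul hf |>.mul
        measurable_id |>.const_mul _ |>.indicator measurableSet_Ioi).aestronglyMeasurable
    · -- Lipschitz bound
      filter_upwards [ae_restrict_mem measurableSet_Ioi] with r hr
      have hr0 : (0:ℝ) < r := lt_trans ha hr
      rw [lipschitzOnWith_iff_dist_le_mul]
      intro t htb u hub
      have htb' := abs_lt.mp (by simpa [Real.dist_eq] using mem_ball.mp htb)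
      have hub' := abs_lt.mp (by simpa [Real.dist_eq] using mem_ball.mp hub)
      have htabs : |t| < 3 * t₀ / 2 := abs_lt.mpr ⟨by linarith, by linarith⟩
      have huabs : |u| < 3 * t₀ / 2 := abs_lt.mpr ⟨by linarith, by linarith⟩
      have hbound_nn : (0:ℝ) ≤ 3 * t₀ * ((j : ℝ) + 1) * r ^ (2 * j) * (|f r| * r) := by
        positivity
      rw [Real.coe_nnabs, abs_of_nonneg hbound_nn, Real.dist_eq, Real.dist_eq]
      have hfac : max (r ^ 2 - t ^ 2) 0 ^ (j + 1) * f r * r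
          - max (r ^ 2 - u ^ 2) 0 ^ (j + 1) * f r * r
          = (max (r ^ 2 - t ^ 2) 0 ^ (j + 1) - max (r ^ 2 - u ^ 2) 0 ^ (j + 1))
            * (f r * r) := by ring
      rw [hfac, abs_mul]
      have h1 : |max (r ^ 2 - t ^ 2) 0 ^ (j + 1) - max (r ^ 2 - u ^ 2) 0 ^ (j + 1)|
          ≤ ((j : ℝ) + 1) * (r ^ 2) ^ j * |(r ^ 2 - t ^ 2) - (r ^ 2 - u ^ 2)| := by
        have := abs_maxpow_sub_le j (B := r ^ 2) (x := r ^ 2 - t ^ 2) (y := r ^ 2 - u ^ 2)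
          (by positivity) (by nlinarith [sq_nonneg t]) (by nlinarith [sq_nonneg u])
        exact_mod_cast this
      have h2 : |(r ^ 2 - t ^ 2) - (r ^ 2 - u ^ 2)| ≤ 3 * t₀ * |t - u| := by
        have hid : (r ^ 2 - t ^ 2) - (r ^ 2 - u ^ 2) = (u + t) * (u - t) := by ring
        rw [hid, abs_mul]
        have h3 : |u + t| ≤ 3 * t₀ := by
          calc |u + t| ≤ |u| + |t| := abs_add_le u t
            _ ≤ 3 * t₀ := by linarith
        have h4 : |u - t| = |t - u| := abs_sub_comm u t
        rw [h4]
        exact mul_le_mul_of_nonneg_right h3 (abs_nonneg _)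
      calc |max (r ^ 2 - t ^ 2) 0 ^ (j + 1) - max (r ^ 2 - u ^ 2) 0 ^ (j + 1)| * |f r * r|
          ≤ (((j : ℝ) + 1) * (r ^ 2) ^ j * (3 * t₀ * |t - u|)) * |f r * r| := by
            refine mul_le_mul_of_nonneg_right (h1.trans ?_) (abs_nonneg _)
            exact mul_le_mul_of_nonneg_left h2 (by positivity)
        _ = 3 * t₀ * ((j : ℝ) + 1) * r ^ (2 * j) * (|f r| * r) * |t - u| := by
            rw [← pow_mul, abs_mul, abs_of_pos hr0]
            ring
    · -- bound integrable
      refine ((integrableOn_fr_pow hm hf hint ha (n := 2 * j + 1) hj2).const_mul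
        (3 * t₀ * ((j : ℝ) + 1))).mono' ?_ ?_
      · exact ((measurable_const.mul (measurable_id.pow_const (2 * j))).mul
          (hf.abs.mul measurable_id)).aestronglyMeasurable
      · filter_upwards [ae_restrict_mem measurableSet_Ioi] with r hr
        have hr0 : (0:ℝ) < r := lt_trans ha hr
        have : ‖3 * t₀ * ((j : ℝ) + 1) * r ^ (2 * j) * (|f r| * r)‖
            = 3 * t₀ * ((j : ℝ) + 1) * r ^ (2 * j) * (|f r| * r) := by
          rw [Real.norm_eq_abs, abs_of_nonneg (by positivity)]
        rw [this]
        have : r ^ (2 * j) * (|f r| * r) = |f r| * r ^ (2 * j + 1) := by ring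
        rw [mul_assoc, this]
    · -- a.e. derivative at t₀
      have hne : ∀ᵐ r ∂μ, r ≠ t₀ := by
        refine ae_restrict_of_ae ?_
        rw [ae_iff]
        have : {r : ℝ | ¬r ≠ t₀} = {t₀} := by ext r; simp
        rw [this]
        exact measure_singleton t₀
      filter_upwards [ae_restrict_mem measurableSet_Ioi, hne] with r hr hrne
      have hr0 : (0:ℝ) < r := lt_trans ha hr
      rcases lt_or_gt_of_ne hrne with hlt | hgt
      · -- r < t₀ : locally zero
        have hev : (fun t => max (r ^ 2 - t ^ 2) 0 ^ (j + 1) * f r * r) =ᶠ[𝓝 t₀]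
            fun _ => (0:ℝ) := by
          filter_upwards [Ioi_mem_nhds hlt] with t (htr : r < t)
          have h0 : r ^ 2 - t ^ 2 ≤ 0 := by nlinarith
          rw [max_eq_right h0, zero_pow (Nat.succ_ne_zero j), zero_mul, zero_mul]
        have hF'0 : F' r = 0 := by
          rw [hF'def, indicator_of_notMem (by simp [not_lt.mpr hlt.le] : r ∉ Ioi t₀)]
        rw [hF'0]
        exact (hasDerivAt_const t₀ (0:ℝ)).congr_of_eventuallyEq hev
      · -- r > t₀
        have hev : (fun t => max (r ^ 2 - t ^ 2) 0 ^ (j + 1) * f r * r) =ᶠ[𝓝 t₀]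
            fun t => (r ^ 2 - t ^ 2) ^ (j + 1) * f r * r := by
          have h1 : Ioo (-r) r ∈ 𝓝 t₀ := Ioo_mem_nhds (by linarith) hgt
          filter_upwards [h1] with t htmem
          obtain ⟨ht1, ht2⟩ := htmem
          have h0 : (0:ℝ) ≤ r ^ 2 - t ^ 2 := by nlinarith [abs_lt.mpr ⟨ht1, ht2⟩, sq_abs t]
          rw [max_eq_left h0]
        have hd : HasDerivAt (fun t => (r ^ 2 - t ^ 2) ^ (j + 1) * f r * r)
            ((((j:ℝ) + 1) * (r ^ 2 - t₀ ^ 2) ^ j * (-(2 * t₀))) * (f r * r)) t₀ := by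
          have h1 : HasDerivAt (fun t : ℝ => r ^ 2 - t ^ 2) (-(2 * t₀)) t₀ := by
            simpa using (hasDerivAt_pow 2 t₀).const_sub (r ^ 2)
          have h2 := (h1.pow (j + 1)).mul_const (f r * r)
          simpa [Nat.add_sub_cancel, mul_comm, mul_assoc, mul_left_comm] using h2
        have hF'v : F' r = (((j:ℝ) + 1) * (r ^ 2 - t₀ ^ 2) ^ j * (-(2 * t₀))) * (f r * r) := by
          rw [hF'def, indicator_of_mem (mem_Ioi.mpr hgt)]
          ring
        rw [hF'v]
        exact hd.congr_of_eventuallyEq hev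
  -- identify the integral of F'
  have hval : ∫ r, F' r ∂μ = -(2 * t₀) * ((j : ℝ) + 1) * Jint f j t₀ := by
    rw [hF'def, hμ, integral_indicator measurableSet_Ioi, Measure.restrict_restrict
      measurableSet_Ioi, Set.inter_eq_self_of_subset_left (Ioi_subset_Ioi hat.le)]
    rw [MeasureTheory.integral_const_mul]
    rfl
  -- identify the function with Jint f (j+1) near t₀
  have heq : Jint f (j + 1) =ᶠ[𝓝 t₀]
      fun t => ∫ r, max (r ^ 2 - t ^ 2) 0 ^ (j + 1) * f r * r ∂μ := by
    filter_upwards [ball_mem_nhds t₀ (by positivity : (0:ℝ) < t₀ / 2)] with t htb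
    have htb' := abs_lt.mp (by simpa [Real.dist_eq] using mem_ball.mp htb)
    have hta : a < t := by rw [ha_def]; linarith
    have ht0 : 0 < t := lt_trans ha hta
    have hIu : Ioc a t ∪ Ioi t = Ioi a := Ioc_union_Ioi_eq_Ioi hta.le
    have hint1 : IntegrableOn (fun r => max (r ^ 2 - t ^ 2) 0 ^ (j + 1) * f r * r)
        (Ioc a t) := (integrableOn_max hm hf hint ha hk2 t).mono_set Ioc_subset_Ioi_self
    have hint2 : IntegrableOn (fun r => max (r ^ 2 - t ^ 2) 0 ^ (j + 1) * f r * r)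
        (Ioi t) := (integrableOn_max hm hf hint ha hk2 t).mono_set (Ioi_subset_Ioi hta.le)
    have hzero : ∫ r in Ioc a t, max (r ^ 2 - t ^ 2) 0 ^ (j + 1) * f r * r = 0 := by
      refine setIntegral_eq_zero_of_forall_eq_zero fun r hrm => ?_
      have hr0 : 0 < r := lt_trans ha hrm.1
      have h0 : r ^ 2 - t ^ 2 ≤ 0 := by nlinarith [hrm.2]
      rw [max_eq_right h0, zero_pow (Nat.succ_ne_zero j), zero_mul, zero_mul]
    have hcongr : ∫ r in Ioi t, max (r ^ 2 - t ^ 2) 0 ^ (j + 1) * f r * r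
        = Jint f (j + 1) t := by
      refine setIntegral_congr_fun measurableSet_Ioi fun r hrm => ?_
      have h0 : (0:ℝ) ≤ r ^ 2 - t ^ 2 := by nlinarith [mem_Ioi.mp hrm]
      simp [max_eq_left h0]
    show Jint f (j + 1) t = ∫ r in Ioi a, max (r ^ 2 - t ^ 2) 0 ^ (j + 1) * f r * r
    rw [← hIu, setIntegral_union Ioc_disjoint_Ioi_same measurableSet_Ioi hint1 hint2,
      hzero, hcongr, zero_add]
  have hfinal := (main.congr_of_eventuallyEq heq)
  rw [hval] at hfinal
  have hcast : ((j : ℝ) + 1) = ((j + 1 : ℕ) : ℝ) := by push_cast; ring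
  rw [hcast] at hfinal
  simpa [Nat.add_sub_cancel] using hfinal

end Main

end EKInversion

/-- Part (i) of Theorem A.3: inversion of the right-sided Erdélyi–Kober integral of integer
order. If `m ≥ 1` and `∫_a^∞ |f(r)| r^{2m−1} dr < ∞` for every `a > 0`, and
`φ(t) = (2/Γ(m)) ∫_t^∞ (r²−t²)^{m−1} f(r) r dr`, then `f = (−D)^m φ` a.e. on `(0,∞)`. -/
theorem erdelyi_kober_minus_integer_inversion
    (m : ℕ) (hm : 1 ≤ m) (f : ℝ → ℝ) (hf : Measurable f)
    (hint : ∀ a : ℝ, 0 < a →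
      ∫⁻ r in Ioi a, ENNReal.ofReal (|f r| * r ^ (2 * (m : ℝ) - 1)) < ⊤)
    (φ : ℝ → ℝ) (hφ : φ = EKminus (m : ℝ) f) :
    ∀ᵐ t ∂(volume.restrict (Ioi (0 : ℝ))), f t = (negD^[m] φ) t := by
  obtain ⟨p, rfl⟩ : ∃ p, m = p + 1 := ⟨m - 1, by omega⟩
  set J := EKInversion.Jint f with hJ
  have hφ' : ∀ t : ℝ, φ t = (2 / (Nat.factorial p : ℝ)) * J p t := by
    intro t
    rw [hφ]
    show (2 / Real.Gamma ((p + 1 : ℕ) : ℝ)) * _ = _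
    have h1 : Real.Gamma ((p + 1 : ℕ) : ℝ) = (Nat.factorial p : ℝ) := by
      push_cast
      exact Real.Gamma_nat_eq_factorial p
    have h2 : ((p + 1 : ℕ) : ℝ) - 1 = ((p : ℕ) : ℝ) := by push_cast; ring
    rw [h1, hJ]
    show _ = (2 / (Nat.factorial p : ℝ)) * ∫ r in Ioi t, (r ^ 2 - t ^ 2) ^ p * f r * r
    congr 1
    refine setIntegral_congr_fun measurableSet_Ioi fun r _ => ?_
    rw [h2, Real.rpow_natCast]
  have key : ∀ i, i ≤ p → ∀ t ∈ Ioi (0:ℝ),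
      negD^[i] φ t = (2 / (Nat.factorial (p - i) : ℝ)) * J (p - i) t := by
    intro i
    induction i with
    | zero => intro _ t _; simpa using hφ' t
    | succ i ih =>
      intro hip t ht
      have hti : (0:ℝ) < t := ht
      have hi : i ≤ p := by omega
      set k := p - i with hk
      have hk1 : 1 ≤ k := by omega
      have hd : HasDerivAt (J k) (-(2 * t) * (k : ℝ) * J (k - 1) t) t :=
        EKInversion.hasDerivAt_Jint hm hf hint hk1 (by omega) hti
      have hEvEq : negD^[i] φ =ᶠ[𝓝 t] fun s => (2 / (Nat.factorial k : ℝ)) * J k s := by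
        filter_upwards [Ioi_mem_nhds hti] with s hs
        exact ih hi s hs
      rw [Function.iterate_succ_apply']
      show -(1 / (2 * t)) * deriv (negD^[i] φ) t
          = (2 / (Nat.factorial (p - (i + 1)) : ℝ)) * J (p - (i + 1)) t
      rw [hEvEq.deriv_eq, (hd.const_mul (2 / (Nat.factorial k : ℝ))).deriv]
      obtain ⟨d, hdd⟩ : ∃ d, k = d + 1 := ⟨k - 1, by omega⟩
      have hpd : p - (i + 1) = d := by omega
      have hkd : k - 1 = d := by omega
      rw [hpd, hkd]
      have hfac : (Nat.factorial k : ℝ) = (k : ℝ) * (Nat.factorial d : ℝ) := by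
        rw [hdd]; push_cast [Nat.factorial_succ]; ring
      have hne1 : (Nat.factorial d : ℝ) ≠ 0 := Nat.cast_ne_zero.mpr (Nat.factorial_ne_zero d)
      have hne2 : (k : ℝ) ≠ 0 := Nat.cast_ne_zero.mpr (by omega)
      have hne3 : t ≠ 0 := ne_of_gt hti
      rw [hfac]
      field_simp
  have hJ0 : ∀ᵐ t : ℝ, t ∈ Ioi (0:ℝ) → HasDerivAt (J 0) (-(f t * t)) t := by
    have H : ∀ n : ℕ, ∀ᵐ t : ℝ, t ∈ Ioi (((n : ℝ) + 1)⁻¹) →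
        HasDerivAt (J 0) (-(f t * t)) t := by
      intro n
      set a : ℝ := ((n : ℝ) + 1)⁻¹ with hadef
      have ha : 0 < a := by positivity
      set g : ℝ → ℝ := (Ioi a).indicator (fun r => f r * r) with hgdef
      have hgint : Integrable g := by
        rw [hgdef, integrable_indicator_iff measurableSet_Ioi]
        refine (EKInversion.integrableOn_fr_pow hm hf hint ha (n := 1) (by omega)).mono'
          ((hf.mul measurable_id).aestronglyMeasurable) ?_
        filter_upwards [ae_restrict_mem measurableSet_Ioi] with r hr
        have hr0 : (0:ℝ) < r := lt_trans ha hr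
        rw [Real.norm_eq_abs, abs_mul, abs_of_pos hr0, pow_one]
      filter_upwards [EKInversion.ae_hasDerivAt_integral_Ioi g hgint] with t hdt htmem
      have hev : J 0 =ᶠ[𝓝 t] fun s => ∫ u in Ioi s, g u := by
        filter_upwards [Ioi_mem_nhds htmem] with s hs
        show J 0 s = ∫ u in Ioi s, g u
        rw [hJ]
        show ∫ r in Ioi s, (r ^ 2 - s ^ 2) ^ 0 * f r * r = ∫ u in Ioi s, g u
        refine setIntegral_congr_fun measurableSet_Ioi fun r hrm => ?_
        have hra : r ∈ Ioi a := mem_Ioi.mpr (lt_trans (mem_Ioi.mp hs) (mem_Ioi.mp hrm))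
        rw [hgdef, indicator_of_mem hra, pow_zero, one_mul]
      have hgt : g t = f t * t := indicator_of_mem htmem _
      rw [hgt] at hdt
      exact hdt.congr_of_eventuallyEq hev
    have hall := ae_all_iff.mpr H
    filter_upwards [hall] with t ht htpos
    obtain ⟨n, hn⟩ := exists_nat_one_div_lt (mem_Ioi.mp htpos)
    rw [one_div] at hn
    exact ht n hn
  rw [ae_restrict_iff' measurableSet_Ioi]
  filter_upwards [hJ0] with t hdt ht
  have htpos : (0:ℝ) < t := ht
  have hlast : negD^[p] φ =ᶠ[𝓝 t] fun s => 2 * J 0 s := by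
    filter_upwards [Ioi_mem_nhds htpos] with s hs
    have h := key p le_rfl s hs
    simpa [Nat.sub_self] using h
  have hder : HasDerivAt (fun s => 2 * J 0 s) (2 * -(f t * t)) t := (hdt ht).const_mul 2
  rw [Function.iterate_succ_apply']
  show f t = -(1 / (2 * t)) * deriv (negD^[p] φ) t
  rw [hlast.deriv_eq, hder.deriv]
  have hne3 : t ≠ 0 := ne_of_gt htpos
  field_simp
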